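/- (Theorem 1, augmentation condition.) Let n ≥ m be an integer, let w*∞ be a D-optimal approximate design with invertible information matrix M_*, let w*_n be a D-optimal exact design of size n with invertible information matrix, let ℓ be a support index of w*_n, and let w⁺_n be any exact design of size n. Then v*_ℓ ≥ m·n·(eff_∞(w⁺_n) − (n−1)/n). -/

import Mathlib

open Matrix BigOperators

/-- An approximate design: nonnegative weights summing to one. -/
def IsDesign {N : ℕ} (w : Fin N → ℝ) : Prop :=
  (∀ i, 0 ≤ w i) ∧ ∑ i, w i = 1

/-- An exact design of size `n`: an approximate design with `n * w i` an integer for all `i`. -/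
def IsExactDesign {N : ℕ} (n : ℕ) (w : Fin N → ℝ) : Prop :=
  IsDesign w ∧ ∀ i, ∃ z : ℤ, (n : ℝ) * w i = (z : ℝ)

/-- The information matrix `M(w) = ∑ i, w i • f i (f i)ᵀ`. -/
noncomputable def infoMatrix {N m : ℕ} (f : Fin N → Fin m → ℝ) (w : Fin N → ℝ) :
    Matrix (Fin m) (Fin m) ℝ :=
  ∑ i, w i • vecMulVec (f i) (f i)

/-- The D-criterion `Φ(M) = det(M)^(1/m)`. -/
noncomputable def Dcrit {m : ℕ} (M : Matrix (Fin m) (Fin m) ℝ) : ℝ :=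
  M.det ^ ((1 : ℝ) / (m : ℝ))

/-- A D-optimal approximate design. -/
def IsDOptimalApprox {N m : ℕ} (f : Fin N → Fin m → ℝ) (w : Fin N → ℝ) : Prop :=
  IsDesign w ∧ ∀ w' : Fin N → ℝ, IsDesign w' →
    Dcrit (infoMatrix f w') ≤ Dcrit (infoMatrix f w)

/-- A D-optimal exact design of size `n`. -/
def IsDOptimalExact {N m : ℕ} (f : Fin N → Fin m → ℝ) (n : ℕ) (w : Fin N → ℝ) : Prop :=
  IsExactDesign n w ∧ ∀ w' : Fin N → ℝ, IsExactDesign n w' →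
    Dcrit (infoMatrix f w') ≤ Dcrit (infoMatrix f w)

/-- The variance function `v_i(w) = f iᵀ M(w)⁻¹ f i`. -/
noncomputable def varfun {N m : ℕ} (f : Fin N → Fin m → ℝ) (w : Fin N → ℝ) (i : Fin N) : ℝ :=
  f i ⬝ᵥ (infoMatrix f w)⁻¹ *ᵥ f i

section Aux

variable {m N : ℕ}

private lemma infoMatrix_mulVec' (f : Fin N → Fin m → ℝ) (w : Fin N → ℝ) (x : Fin m → ℝ) :
    infoMatrix f w *ᵥ x = ∑ i, (w i * (f i ⬝ᵥ x)) • f i := by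
  funext a
  simp only [infoMatrix, mulVec, dotProduct, Matrix.sum_apply, Matrix.smul_apply,
    vecMulVec_apply, smul_eq_mul, Finset.sum_mul, Finset.sum_apply, Pi.smul_apply]
  rw [Finset.sum_comm]
  refine Finset.sum_congr rfl fun i _ => ?_
  rw [Finset.mul_sum, Finset.sum_mul]
  exact Finset.sum_congr rfl fun b _ => by ring

private lemma quadform' (f : Fin N → Fin m → ℝ) (w : Fin N → ℝ) (x : Fin m → ℝ) :
    x ⬝ᵥ infoMatrix f w *ᵥ x = ∑ i, w i * (f i ⬝ᵥ x) ^ 2 := by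
  rw [infoMatrix_mulVec']
  simp only [dotProduct, Finset.sum_apply, Pi.smul_apply, smul_eq_mul, Finset.mul_sum]
  rw [Finset.sum_comm]
  refine Finset.sum_congr rfl fun i _ => ?_
  simp only [pow_two, Finset.sum_mul_sum, Finset.mul_sum, Finset.sum_mul]
  refine Finset.sum_congr rfl fun a _ => ?_
  exact Finset.sum_congr rfl fun b _ => by ring

private lemma infoMatrix_posSemidef (f : Fin N → Fin m → ℝ) {w : Fin N → ℝ}
    (hw : ∀ i, 0 ≤ w i) : (infoMatrix f w).PosSemidef := by
  refine Matrix.PosSemidef.of_dotProduct_mulVec_nonneg ?_ ?_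
  · ext a b
    simp only [infoMatrix, conjTranspose_apply, Matrix.sum_apply, Matrix.smul_apply,
      vecMulVec_apply, smul_eq_mul, star_trivial]
    exact Finset.sum_congr rfl fun i _ => by ring
  · intro x
    rw [star_trivial, quadform']
    exact Finset.sum_nonneg fun i _ => mul_nonneg (hw i) (sq_nonneg _)

private lemma trace_mul_vecMulVec (A : Matrix (Fin m) (Fin m) ℝ) (u : Fin m → ℝ) :
    (A * vecMulVec u u).trace = u ⬝ᵥ A *ᵥ u := by
  simp only [Matrix.trace, Matrix.diag_apply, Matrix.mul_apply, vecMulVec_apply,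
    dotProduct, mulVec, Finset.mul_sum]
  refine Finset.sum_congr rfl fun a _ => Finset.sum_congr rfl fun b _ => by ring

private lemma trace_mul_infoMatrix (A : Matrix (Fin m) (Fin m) ℝ) (f : Fin N → Fin m → ℝ)
    (w : Fin N → ℝ) :
    (A * infoMatrix f w).trace = ∑ i, w i * (f i ⬝ᵥ A *ᵥ f i) := by
  unfold infoMatrix
  rw [Matrix.mul_sum, Matrix.trace_sum]
  refine Finset.sum_congr rfl fun i _ => ?_
  rw [Matrix.mul_smul, Matrix.trace_smul, trace_mul_vecMulVec, smul_eq_mul]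

private lemma posDef_of_psd_det_ne_zero {A : Matrix (Fin m) (Fin m) ℝ} (hA : A.PosSemidef)
    (h : A.det ≠ 0) : A.PosDef := by
  refine Matrix.PosDef.of_dotProduct_mulVec_pos hA.1 fun x hx => ?_
  rcases lt_or_eq_of_le (hA.dotProduct_mulVec_nonneg x) with hlt | heq
  · exact hlt
  · exfalso
    have h0 : A *ᵥ x = 0 := (hA.dotProduct_mulVec_zero_iff x).mp heq.symm
    apply hx
    have hinv := A.nonsing_inv_mul (isUnit_iff_ne_zero.mpr h)
    calc x = (A⁻¹ * A) *ᵥ x := by rw [hinv, Matrix.one_mulVec]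
      _ = A⁻¹ *ᵥ (A *ᵥ x) := by rw [← Matrix.mulVec_mulVec]
      _ = 0 := by rw [h0, Matrix.mulVec_zero]

private lemma trace_eq_sum_eigen {A : Matrix (Fin m) (Fin m) ℝ} (hA : A.IsHermitian) :
    A.trace = ∑ i, hA.eigenvalues i := by
  rw [hA.trace_eq_sum_eigenvalues]
  simp

private lemma psd_det_nonneg {A : Matrix (Fin m) (Fin m) ℝ} (hA : A.PosSemidef) :
    0 ≤ A.det := by
  rw [hA.1.det_eq_prod_eigenvalues]
  simp only [RCLike.ofReal_real_eq_id, id_eq]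
  exact Finset.prod_nonneg fun i _ => hA.eigenvalues_nonneg i

open scoped MatrixOrder in
private lemma det_rpow_le {A B : Matrix (Fin m) (Fin m) ℝ} (hm : 0 < m) (hA : A.PosDef)
    (hB : B.PosSemidef) :
    B.det ^ ((1:ℝ)/(m:ℝ)) ≤ A.det ^ ((1:ℝ)/(m:ℝ)) * ((A⁻¹ * B).trace / m) := by
  have hAi : (A⁻¹).PosDef := hA.inv
  set S := CFC.sqrt A⁻¹ with hS
  have hSH : S.IsHermitian := (CFC.sqrt_nonneg A⁻¹).posSemidef.1
  have hSS : S * S = A⁻¹ := CFC.sqrt_mul_sqrt_self A⁻¹ hAi.posSemidef.nonneg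
  have hC : (S * B * S).PosSemidef := by
    have := hB.mul_mul_conjTranspose_same S
    rwa [hSH.eq] at this
  set C := S * B * S with hCdef
  have htr : C.trace = (A⁻¹ * B).trace := by
    rw [hCdef, Matrix.trace_mul_cycle, hSS]
  have hdetC : C.det = A⁻¹.det * B.det := by
    rw [hCdef, Matrix.det_mul, Matrix.det_mul, ← hSS, Matrix.det_mul]
    ring
  have heig := hC.eigenvalues_nonneg
  have hamgm : C.det ^ ((1:ℝ)/(m:ℝ)) ≤ C.trace / m := by
    rw [trace_eq_sum_eigen hC.1, hC.1.det_eq_prod_eigenvalues]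
    simp only [RCLike.ofReal_real_eq_id, id_eq]
    rw [← Real.finset_prod_rpow _ _ (fun i _ => heig i) _]
    have := Real.geom_mean_le_arith_mean_weighted Finset.univ
      (fun _ : Fin m => (1:ℝ)/(m:ℝ)) (fun i => hC.1.eigenvalues i)
      (fun i _ => by positivity)
      (by simp [Finset.card_univ]; field_simp)
      (fun i _ => heig i)
    calc ∏ i, hC.1.eigenvalues i ^ ((1:ℝ)/(m:ℝ))
        ≤ ∑ i, (1:ℝ)/(m:ℝ) * hC.1.eigenvalues i := this
      _ = (∑ i, hC.1.eigenvalues i) / m := by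
          rw [Finset.sum_div]; exact Finset.sum_congr rfl fun i _ => by ring
  have hdetB : B.det = A.det * C.det := by
    rw [hdetC, Matrix.det_nonsing_inv, Ring.inverse_eq_inv]
    field_simp [hA.det_pos.ne']
  have hCdet0 : 0 ≤ C.det := psd_det_nonneg hC
  rw [hdetB, Real.mul_rpow hA.det_pos.le hCdet0]
  rw [htr] at hamgm
  exact mul_le_mul_of_nonneg_left hamgm (Real.rpow_nonneg hA.det_pos.le _)

private lemma det_convex {M : Matrix (Fin m) (Fin m) ℝ} (hM : M.det ≠ 0) (u : Fin m → ℝ) {t : ℝ}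
    (ht : t ≠ 1) :
    ((1-t) • M + t • vecMulVec u u).det
      = (1-t)^m * (M.det * (1 + (t/(1-t)) * (u ⬝ᵥ M⁻¹ *ᵥ u))) := by
  have h1t : (1:ℝ) - t ≠ 0 := sub_ne_zero.mpr (Ne.symm ht)
  have hsplit : (1-t) • M + t • vecMulVec u u
      = (1-t) • (M + vecMulVec ((t/(1-t)) • u) u) := by
    rw [smul_add]
    congr 1
    ext a b
    simp only [vecMulVec_apply, Matrix.smul_apply, Pi.smul_apply, smul_eq_mul]
    field_simp
  rw [hsplit, Matrix.det_smul, Fintype.card_fin]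
  congr 1
  rw [show vecMulVec ((t/(1-t)) • u) u = replicateCol (Fin 1) ((t/(1-t)) • u) * replicateRow (Fin 1) u from
      vecMulVec_eq (Fin 1) _ _,
    Matrix.det_add_mul (Matrix.replicateCol (Fin 1) ((t/(1-t)) • u)) (Matrix.replicateRow (Fin 1) u)
      (isUnit_iff_ne_zero.mpr hM)]
  congr 1
  rw [Matrix.det_fin_one, Matrix.add_apply, Matrix.one_apply_eq]
  congr 1
  rw [← Matrix.replicateRow_vecMul, Matrix.replicateRow_mul_replicateCol_apply, dotProduct_smul,
    smul_eq_mul, ← Matrix.dotProduct_mulVec]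

private lemma infoMatrix_convex (f : Fin N → Fin m → ℝ) (w : Fin N → ℝ) (i : Fin N) (t : ℝ) :
    infoMatrix f (fun j => (1-t) * w j + t * (if j = i then 1 else 0))
      = (1-t) • infoMatrix f w + t • vecMulVec (f i) (f i) := by
  unfold infoMatrix
  have key : ∀ j : Fin N, ((1-t) * w j + t * (if j = i then 1 else 0)) • vecMulVec (f j) (f j)
      = (1-t) • (w j • vecMulVec (f j) (f j))
        + (if j = i then t • vecMulVec (f i) (f i) else 0) := by
    intro j
    by_cases hj : j = i
    · subst hj; simp [add_smul, mul_smul]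
    · simp [hj, add_smul, mul_smul]
  rw [Finset.sum_congr rfl (fun j _ => key j), Finset.sum_add_distrib,
    Finset.sum_ite_eq' Finset.univ i, ← Finset.smul_sum]
  simp

private lemma rpow_cancel {a b : ℝ} (ha : 0 ≤ a) (hb : 0 ≤ b) {k : ℕ} (hk : k ≠ 0)
    (h : a ^ ((1:ℝ)/(k:ℝ)) ≤ b ^ ((1:ℝ)/(k:ℝ))) : a ≤ b := by
  have hb' : (0:ℝ) ≤ b ^ ((1:ℝ)/(k:ℝ)) := le_trans (Real.rpow_nonneg ha _) h
  have hpow := pow_le_pow_left₀ (Real.rpow_nonneg ha _) h k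
  have hk' : ((k:ℝ)) ≠ 0 := Nat.cast_ne_zero.mpr hk
  have ha2 : (a ^ ((1:ℝ)/(k:ℝ))) ^ k = a := by
    rw [← Real.rpow_natCast (a ^ ((1:ℝ)/(k:ℝ))) k, ← Real.rpow_mul ha, one_div,
      inv_mul_cancel₀ hk', Real.rpow_one]
  have hb2 : (b ^ ((1:ℝ)/(k:ℝ))) ^ k = b := by
    rw [← Real.rpow_natCast (b ^ ((1:ℝ)/(k:ℝ))) k, ← Real.rpow_mul hb, one_div,
      inv_mul_cancel₀ hk', Real.rpow_one]
  calc a = (a ^ ((1:ℝ)/(k:ℝ))) ^ k := ha2.symm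
    _ ≤ (b ^ ((1:ℝ)/(k:ℝ))) ^ k := hpow
    _ = b := hb2

private lemma varfun_le_card {f : Fin N → Fin m → ℝ} {wapp : Fin N → ℝ} (hm : 2 ≤ m)
    (happ : IsDOptimalApprox f wapp) (hns : (infoMatrix f wapp).det ≠ 0) (i : Fin N) :
    varfun f wapp i ≤ m := by
  by_contra hv
  push_neg at hv
  set M := infoMatrix f wapp with hMdef
  set v := varfun f wapp i with hvdef
  have hPSD : M.PosSemidef := infoMatrix_posSemidef f happ.1.1
  have hPD : M.PosDef := posDef_of_psd_det_ne_zero hPSD hns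
  have hdet : 0 < M.det := hPD.det_pos
  have hm2 : (2:ℝ) ≤ (m:ℝ) := by exact_mod_cast hm
  have hvm : (m:ℝ) < v := hv
  have hv1 : (0:ℝ) < v - 1 := by linarith
  set D : ℝ := ((m:ℝ) - 1) * (v - 1) with hDdef
  have hD : 0 < D := mul_pos (by linarith) hv1
  set t : ℝ := min (1/2 : ℝ) ((v - m)/(2*D)) with htdef
  have ht0 : 0 < t := lt_min (by norm_num) (div_pos (by linarith) (by linarith))
  have ht2 : t ≤ 1/2 := min_le_left _ _
  have ht1 : t ≠ 1 := by intro h; rw [h] at ht2; norm_num at ht2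
  have h1t : (0:ℝ) < 1 - t := by linarith
  set w' : Fin N → ℝ := fun j => (1-t) * wapp j + t * (if j = i then 1 else 0) with hw'def
  have hw'design : IsDesign w' := by
    constructor
    · intro j
      refine add_nonneg (mul_nonneg (by linarith) (happ.1.1 j)) (mul_nonneg ht0.le ?_)
      by_cases hj : j = i <;> simp [hj]
    · rw [hw'def]
      rw [Finset.sum_add_distrib, ← Finset.mul_sum, ← Finset.mul_sum, happ.1.2,
        Finset.sum_ite_eq' Finset.univ i]
      simp
  have hMt : infoMatrix f w' = (1-t) • M + t • vecMulVec (f i) (f i) :=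
    infoMatrix_convex f wapp i t
  have hle : Dcrit (infoMatrix f w') ≤ Dcrit M := happ.2 w' hw'design
  have hPSDt : (infoMatrix f w').PosSemidef := infoMatrix_posSemidef f hw'design.1
  have hdets : (infoMatrix f w').det ≤ M.det :=
    rpow_cancel (psd_det_nonneg hPSDt) hdet.le (by omega) hle
  rw [hMt, det_convex hdet.ne' (f i) ht1] at hdets
  have hveq : f i ⬝ᵥ M⁻¹ *ᵥ f i = v := rfl
  rw [hveq] at hdets
  -- reduce to scalar inequality
  have hkey : (1-t)^m * (1 + (t/(1-t)) * v) ≤ 1 := by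
    have := hdets
    nlinarith [hdet, mul_pos (pow_pos h1t m) hdet]
  have hsplitpow : (1-t)^m = (1-t)^(m-1) * (1-t) := by
    conv_lhs => rw [show m = (m-1)+1 by omega]
    rw [pow_succ]
  have hprod : (1-t)^(m-1) * ((1-t) + t * v) ≤ 1 := by
    have : (1-t) * (1 + (t/(1-t)) * v) = (1-t) + t * v := by
      field_simp
    calc (1-t)^(m-1) * ((1-t) + t * v)
        = (1-t)^m * (1 + (t/(1-t)) * v) := by rw [hsplitpow]; rw [← this]; ring
      _ ≤ 1 := hkey
  have hbern : 1 - ((m:ℝ)-1) * t ≤ (1-t)^(m-1) := by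
    have := one_add_mul_le_pow (by linarith : (-2:ℝ) ≤ -t) (m-1)
    have hcast : (((m-1 : ℕ)):ℝ) = (m:ℝ) - 1 := by
      have : (1:ℕ) ≤ m := by omega
      push_cast [Nat.cast_sub this]
      ring
    calc 1 - ((m:ℝ)-1) * t = 1 + ((m-1 : ℕ):ℝ) * (-t) := by rw [hcast]; ring
      _ ≤ (1 + -t)^(m-1) := this
      _ = (1-t)^(m-1) := by ring_nf
  have hfac : (0:ℝ) ≤ (1-t) + t * v := by nlinarith
  have hlow : (1 - ((m:ℝ)-1) * t) * ((1-t) + t * v) ≤ 1 :=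
    le_trans (mul_le_mul_of_nonneg_right hbern hfac) hprod
  -- expand and contradict
  have htle : t ≤ (v - m)/(2*D) := min_le_right _ _
  have htD : t * (((m:ℝ) - 1) * (v - 1)) ≤ (v - m)/2 := by
    rw [le_div_iff₀ (by linarith : (0:ℝ) < 2*D)] at htle
    rw [hDdef] at htle
    nlinarith
  have hstep : t * (t * (((m:ℝ)-1)*(v-1))) ≤ t * ((v - (m:ℝ))/2) :=
    mul_le_mul_of_nonneg_left htD ht0.le
  nlinarith [hlow, hstep, mul_pos ht0 (sub_pos.mpr hvm)]

end Aux

theorem augmentation_condition {m N : ℕ} (hm : 2 ≤ m) (hN : 2 ≤ N) (f : Fin N → Fin m → ℝ)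
    (n : ℕ) (hn : m ≤ n)
    (hex : ∃ w : Fin N → ℝ, IsExactDesign n w ∧ (infoMatrix f w).det ≠ 0)
    (wapp : Fin N → ℝ) (happ : IsDOptimalApprox f wapp)
    (happns : (infoMatrix f wapp).det ≠ 0)
    (wopt : Fin N → ℝ) (hopt : IsDOptimalExact f n wopt)
    (hoptns : (infoMatrix f wopt).det ≠ 0)
    (ℓ : Fin N) (hℓ : 0 < wopt ℓ)
    (wplus : Fin N → ℝ) (hplus : IsExactDesign n wplus) :
    varfun f wapp ℓ ≥
      (m : ℝ) * (n : ℝ) *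
        (Dcrit (infoMatrix f wplus) / Dcrit (infoMatrix f wapp) - ((n : ℝ) - 1) / (n : ℝ)) := by
  have hm0 : (0:ℝ) < m := by
    have : 0 < m := by omega
    exact_mod_cast this
  have hn0 : (0:ℝ) < n := by
    have : 0 < n := by omega
    exact_mod_cast this
  set Ms := infoMatrix f wapp with hMs
  have hPSDs : Ms.PosSemidef := infoMatrix_posSemidef f happ.1.1
  have hPDs : Ms.PosDef := posDef_of_psd_det_ne_zero hPSDs happns
  have hPhi : 0 < Dcrit Ms := Real.rpow_pos_of_pos hPDs.det_pos _
  set v := varfun f wapp ℓ with hv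
  have hvall : ∀ i, varfun f wapp i ≤ m := fun i => varfun_le_card hm happ happns i
  have hvm : v ≤ m := hvall ℓ
  have h1 : Dcrit (infoMatrix f wplus) ≤ Dcrit (infoMatrix f wopt) := hopt.2 wplus hplus
  have hPSDopt : (infoMatrix f wopt).PosSemidef := infoMatrix_posSemidef f hopt.1.1.1
  have h2 : Dcrit (infoMatrix f wopt) ≤ Dcrit Ms * ((Ms⁻¹ * infoMatrix f wopt).trace / m) :=
    det_rpow_le (by omega) hPDs hPSDopt
  have h3 : (Ms⁻¹ * infoMatrix f wopt).trace = ∑ i, wopt i * varfun f wapp i :=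
    trace_mul_infoMatrix _ f wopt
  have hsum : ∑ i, wopt i = 1 := hopt.1.1.2
  have hsplit : wopt ℓ * varfun f wapp ℓ
      + ∑ i ∈ Finset.univ.erase ℓ, wopt i * varfun f wapp i
      = ∑ i, wopt i * varfun f wapp i :=
    Finset.add_sum_erase Finset.univ (fun i => wopt i * varfun f wapp i) (Finset.mem_univ ℓ)
  have hsplitw : wopt ℓ + ∑ i ∈ Finset.univ.erase ℓ, wopt i = ∑ i, wopt i :=
    Finset.add_sum_erase Finset.univ (fun i => wopt i) (Finset.mem_univ ℓ)
  have hbound : ∑ i ∈ Finset.univ.erase ℓ, wopt i * varfun f wapp i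
      ≤ ∑ i ∈ Finset.univ.erase ℓ, wopt i * m :=
    Finset.sum_le_sum fun i _ => mul_le_mul_of_nonneg_left (hvall i) (hopt.1.1.1 i)
  have herasew : ∑ i ∈ Finset.univ.erase ℓ, wopt i * (m:ℝ)
      = (1 - wopt ℓ) * m := by
    rw [← Finset.sum_mul]
    have : ∑ i ∈ Finset.univ.erase ℓ, wopt i = 1 - wopt ℓ := by
      rw [hsum] at hsplitw; linarith
    rw [this]
  have h4 : ∑ i, wopt i * varfun f wapp i ≤ (m:ℝ) - wopt ℓ * ((m:ℝ) - v) := by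
    rw [hv]
    nlinarith [hsplit, hbound, herasew]
  obtain ⟨z, hz⟩ := hopt.1.2 ℓ
  have hz1 : (1:ℝ) ≤ (n:ℝ) * wopt ℓ := by
    have hzR : (0:ℝ) < (z:ℝ) := hz ▸ mul_pos hn0 hℓ
    have hzpos : 0 < z := by exact_mod_cast hzR
    rw [hz]
    exact_mod_cast hzpos
  have h5 : 1/(n:ℝ) ≤ wopt ℓ := by
    rw [div_le_iff₀ hn0]
    nlinarith [hz1]
  have h6 : (Ms⁻¹ * infoMatrix f wopt).trace ≤ (m:ℝ) - (1/n) * ((m:ℝ) - v) := by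
    rw [h3]
    nlinarith [h4, mul_le_mul_of_nonneg_right h5 (by linarith : (0:ℝ) ≤ (m:ℝ) - v)]
  have h7 : Dcrit (infoMatrix f wplus)
      ≤ Dcrit Ms * (((m:ℝ) - (1/n)*((m:ℝ)-v))/m) := by
    refine le_trans h1 (le_trans h2 ?_)
    gcongr
  have h7' : Dcrit (infoMatrix f wplus) / Dcrit Ms ≤ ((m:ℝ) - (1/n)*((m:ℝ)-v))/m := by
    rw [div_le_iff₀ hPhi, mul_comm]
    exact h7
  rw [ge_iff_le]
  set X := Dcrit (infoMatrix f wplus) / Dcrit Ms with hX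
  have e1 : (m:ℝ)*n*(X - ((n:ℝ)-1)/n) = m*n*X - (m*n - m) := by field_simp
  have e2 : (m:ℝ)*n*X ≤ m*n*(((m:ℝ) - (1/n)*((m:ℝ)-v))/m) :=
    mul_le_mul_of_nonneg_left h7' (by positivity)
  have e3 : (m:ℝ)*n*(((m:ℝ) - (1/n)*((m:ℝ)-v))/m) = m*n - ((m:ℝ) - v) := by
    field_simp
  linarith [e1, e2, e3]
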